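/- arXiv:2111.04698 — 7 statements merged into one kernel-verified Lean document; each statement's English description precedes it below -/
import Mathlib

section
/- Let S be a finite nonempty type, A a finite nonempty type, γ ∈ [0,1), and for each b : A let P b : Matrix S S ℝ be row-stochastic. For σ : S → A define (P_σ) s s' = (P (σ s)) s s' and for r : S → ℝ define V_σ(r) = (I − γ·P_σ)⁻¹ *ᵥ r. Then for every r : S → ℝ, every λ₁ > 0, every λ₂ ∈ ℝ, and every π : S → A: π satisfies V_π(r) s ≥ V_σ(r) s for all σ and s if and only if π satisfies V_π(λ₁ • r + λ₂ • 𝟙) s ≥ V_σ(λ₁ • r + λ₂ • 𝟙) s for all σ and s. In other words, the set of optimal policies under a reward vector is invariant under positive affine transformations of the reward. -/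
open Matrix

/-- The one-step transition matrix induced by a stationary deterministic policy `σ`,
where `P b` is the transition matrix under action `b`. -/
def policyMatrix {S A : Type*} (P : A → Matrix S S ℝ) (σ : S → A) : Matrix S S ℝ :=
  Matrix.of fun s s' => P (σ s) s s'

lemma stoch_key {S : Type*} [Fintype S] [Nonempty S] [DecidableEq S]
    (γ : ℝ) (hγ0 : 0 ≤ γ) (hγ1 : γ < 1)
    (Q : Matrix S S ℝ) (hQ0 : ∀ i j, 0 ≤ Q i j) (hQ1 : ∀ i, ∑ j, Q i j = 1) :
    (1 - γ • Q)⁻¹ *ᵥ (1 : S → ℝ) = (1 - γ)⁻¹ • (1 : S → ℝ) := by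
  have hQle1 : ∀ i, Q i i ≤ 1 := fun i => by
    rw [← hQ1 i]
    exact Finset.single_le_sum (fun j _ => hQ0 i j) (Finset.mem_univ i)
  have hdet : (1 - γ • Q).det ≠ 0 := by
    apply det_ne_zero_of_sum_row_lt_diag
    intro k
    have h1 : ∀ j ∈ Finset.univ.erase k, ‖(1 - γ • Q) k j‖ = γ * Q k j := by
      intro j hj
      have hjk : j ≠ k := (Finset.mem_erase.mp hj).1
      rw [Matrix.sub_apply, Matrix.smul_apply, Matrix.one_apply_ne' hjk]
      simp only [zero_sub, Real.norm_eq_abs, abs_neg]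
      exact abs_of_nonneg (mul_nonneg hγ0 (hQ0 k j))
    rw [Finset.sum_congr rfl h1]
    have hsum : ∑ j ∈ Finset.univ.erase k, γ * Q k j = γ * (1 - Q k k) := by
      rw [← Finset.mul_sum, Finset.sum_erase_eq_sub (Finset.mem_univ k), hQ1 k]
    rw [hsum]
    have hdiag : ‖(1 - γ • Q) k k‖ = 1 - γ * Q k k := by
      have : γ * Q k k < 1 := lt_of_le_of_lt
        (mul_le_of_le_one_right hγ0 (hQle1 k)) hγ1
      rw [Matrix.sub_apply, Matrix.smul_apply, Matrix.one_apply_eq]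
      simp [Real.norm_eq_abs, abs_of_nonneg (by linarith : (0:ℝ) ≤ 1 - γ * Q k k)]
    rw [hdiag]
    nlinarith [mul_nonneg hγ0 (sub_nonneg.mpr (hQle1 k)), hQ0 k k,
      mul_nonneg hγ0 (hQ0 k k)]
  have hunit : IsUnit (1 - γ • Q).det := isUnit_iff_ne_zero.mpr hdet
  have hmv : (1 - γ • Q) *ᵥ ((1 - γ)⁻¹ • (1 : S → ℝ)) = 1 := by
    have hQ1v : Q *ᵥ (1 : S → ℝ) = 1 := by
      ext i
      simp [Matrix.mulVec, dotProduct, hQ1 i]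
    rw [Matrix.mulVec_smul, Matrix.sub_mulVec, Matrix.one_mulVec,
      Matrix.smul_mulVec, hQ1v]
    ext s
    have h1γ : (1 : ℝ) - γ ≠ 0 := by linarith
    simp [Pi.smul_apply, Pi.sub_apply]
    field_simp
  calc (1 - γ • Q)⁻¹ *ᵥ (1 : S → ℝ)
      = (1 - γ • Q)⁻¹ *ᵥ ((1 - γ • Q) *ᵥ ((1 - γ)⁻¹ • (1 : S → ℝ))) := by rw [hmv]
    _ = ((1 - γ • Q)⁻¹ * (1 - γ • Q)) *ᵥ ((1 - γ)⁻¹ • (1 : S → ℝ)) := by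
        rw [Matrix.mulVec_mulVec]
    _ = (1 - γ)⁻¹ • (1 : S → ℝ) := by rw [Matrix.nonsing_inv_mul _ hunit, Matrix.one_mulVec]

/-- **Lemma 1, matrix form.** The set of optimal policies is invariant
under positive affine transformations `λ₁ • r + λ₂ • 𝟙` (with `λ₁ > 0`) of the
reward vector. -/
theorem optimal_policy_invariant_affine
    {S A : Type*} [Fintype S] [Nonempty S] [DecidableEq S]
    [Fintype A] [Nonempty A]
    (γ : ℝ) (hγ0 : 0 ≤ γ) (hγ1 : γ < 1)
    (P : A → Matrix S S ℝ)
    (hP : ∀ b, (∀ i j, 0 ≤ P b i j) ∧ ∀ i, ∑ j, P b i j = 1)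
    (r : S → ℝ) (l1 l2 : ℝ) (hl1 : 0 < l1) (π : S → A) :
    (∀ σ : S → A, ∀ s : S,
        ((1 - γ • policyMatrix P σ)⁻¹ *ᵥ r) s ≤
          ((1 - γ • policyMatrix P π)⁻¹ *ᵥ r) s) ↔
    (∀ σ : S → A, ∀ s : S,
        ((1 - γ • policyMatrix P σ)⁻¹ *ᵥ (l1 • r + l2 • (1 : S → ℝ))) s ≤
          ((1 - γ • policyMatrix P π)⁻¹ *ᵥ (l1 • r + l2 • (1 : S → ℝ))) s) := by
  have key : ∀ σ : S → A, ∀ s : S,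
      ((1 - γ • policyMatrix P σ)⁻¹ *ᵥ (l1 • r + l2 • (1 : S → ℝ))) s
        = l1 * ((1 - γ • policyMatrix P σ)⁻¹ *ᵥ r) s + l2 * (1 - γ)⁻¹ := by
    intro σ s
    have h1 : (1 - γ • policyMatrix P σ)⁻¹ *ᵥ (1 : S → ℝ)
        = (1 - γ)⁻¹ • (1 : S → ℝ) :=
      stoch_key γ hγ0 hγ1 _ (fun i j => (hP (σ i)).1 i j) (fun i => (hP (σ i)).2 i)
    rw [Matrix.mulVec_add, Matrix.mulVec_smul, Matrix.mulVec_smul, h1]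
    simp [mul_comm]
  constructor
  · intro h σ s
    rw [key σ s, key π s]
    have := h σ s
    nlinarith
  · intro h σ s
    have := h σ s
    rw [key σ s, key π s] at this
    nlinarith
end

section
/- Let N ≥ 2 and let V ⊆ ℝ^N be a two-dimensional linear subspace. Then there exist vectors φ₁, …, φ_{N−1} ∈ ℝ^N, each orthogonal to V (i.e. ⟨φᵢ, v⟩ = 0 for all v ∈ V), such that V equals the intersection of the half-spaces Hᵢ = { x ∈ ℝ^N : ⟨φᵢ, x⟩ ≥ 0 } for i = 1, …, N−1. -/
open Matrix Module

/-! If `f₁, …, f_c` are linear equations cutting out a subspace `W` of codimension `c`, then `W`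
is also cut out by the `c + 1` inequalities `fⱼ ≥ 0` and `-∑ fⱼ ≥ 0`, since nonnegative numbers
with nonpositive sum all vanish. For a plane in `ℝ^N` this gives `N - 1` half-spaces, and each such
functional vanishes on the plane because a subspace contained in a half-space lies in its boundary. -/

lemma forall_eq_zero_iff_nonneg_and_neg_sum_nonneg {K ι : Type*} [AddCommGroup K] [PartialOrder K]
    [IsOrderedAddMonoid K] [Fintype ι] (a : ι → K) :
    (∀ j, a j = 0) ↔ 0 ≤ -∑ j, a j ∧ ∀ j, 0 ≤ a j := by
  constructor
  · intro h
    simp [h]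
  · rintro ⟨hsum, hnonneg⟩
    have hsum_eq : ∑ j, a j = 0 :=
      le_antisymm (neg_nonneg.mp hsum) (Finset.sum_nonneg fun j _ => hnonneg j)
    exact fun j => (Finset.sum_eq_zero_iff_of_nonneg fun j _ => hnonneg j).mp hsum_eq j
      (Finset.mem_univ j)

section OrderedRing

variable {K M : Type*} [CommRing K] [PartialOrder K] [IsOrderedAddMonoid K]
  [AddCommGroup M] [Module K M]

lemma Submodule.apply_eq_zero_of_subset_halfspace {W : Submodule K M} {f : Dual K M}
    (hW : (W : Set M) ⊆ {x | 0 ≤ f x}) {w : M} (hw : w ∈ W) : f w = 0 := by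
  have hneg : 0 ≤ f (-w) := hW (W.neg_mem hw)
  rw [map_neg, neg_nonneg] at hneg
  exact le_antisymm hneg (hW hw)

lemma setOf_forall_apply_eq_zero_eq_iInter_halfspaces {k : ℕ} (f : Fin k → Dual K M) :
    {x | ∀ j, f j x = 0} = ⋂ i, {x | 0 ≤ (Fin.cons (-∑ j, f j) f : Fin (k + 1) → Dual K M) i x} := by
  ext x
  simp only [Set.mem_ofPred_eq, forall_eq_zero_iff_nonneg_and_neg_sum_nonneg, Set.mem_iInter,
    Fin.forall_fin_succ, Fin.cons_zero, Fin.cons_succ, LinearMap.neg_apply, LinearMap.sum_apply]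

end OrderedRing

section Field

variable {K M : Type*} [Field K] [AddCommGroup M] [Module K M] [FiniteDimensional K M]

lemma Submodule.exists_dual_forall_apply_eq_zero_iff (W : Submodule K M) :
    ∃ f : Fin (finrank K M - finrank K W) → Dual K M, ∀ x, x ∈ W ↔ ∀ j, f j x = 0 := by
  let b := finBasisOfFinrankEq K (M ⧸ W) W.finrank_quotient
  refine ⟨fun j => (b.coord j).comp W.mkQ, fun x => ?_⟩
  rw [← Submodule.Quotient.mk_eq_zero, ← b.forall_coord_eq_zero_iff]
  rfl

lemma Submodule.exists_coe_eq_iInter_halfspaces [PartialOrder K] [IsOrderedAddMonoid K]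
    (W : Submodule K M) :
    ∃ φ : Fin (finrank K M - finrank K W + 1) → Dual K M, (W : Set M) = ⋂ i, {x | 0 ≤ φ i x} := by
  obtain ⟨f, hf⟩ := W.exists_dual_forall_apply_eq_zero_iff
  exact ⟨_, (Set.ext hf).trans (setOf_forall_apply_eq_zero_eq_iInter_halfspaces f)⟩

end Field

theorem plane_eq_inter_halfspaces_general
    (N : ℕ) (V : Submodule ℝ (Fin N → ℝ))
    (hV : Module.finrank ℝ V = 2) :
    ∃ φ : Fin (N - 1) → (Fin N → ℝ),
      (∀ i, ∀ v ∈ V, φ i ⬝ᵥ v = 0) ∧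
      (V : Set (Fin N → ℝ)) = ⋂ i, {x : Fin N → ℝ | 0 ≤ φ i ⬝ᵥ x} := by
  have hindex : finrank ℝ (Fin N → ℝ) - finrank ℝ V + 1 = N - 1 := by
    have := V.finrank_le
    rw [finrank_fin_fun] at this ⊢
    omega
  have hcut := V.exists_coe_eq_iInter_halfspaces
  rw [hindex] at hcut
  obtain ⟨φ, hφ⟩ := hcut
  have hdot (f : Dual ℝ (Fin N → ℝ)) (x : Fin N → ℝ) :
      (dotProductEquiv ℝ (Fin N)).symm f ⬝ᵥ x = f x :=
    LinearMap.congr_fun ((dotProductEquiv ℝ (Fin N)).apply_symm_apply f) x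
  refine ⟨fun i => (dotProductEquiv ℝ (Fin N)).symm (φ i), ?_, ?_⟩ <;> simp only [hdot]
  · exact fun i v hv => V.apply_eq_zero_of_subset_halfspace (hφ ▸ Set.iInter_subset _ i) hv
  · exact hφ

/-- **technical Lemma, plane case.** Any two-dimensional linear subspace
of `ℝ^N` (with `N ≥ 2`) is the intersection of `N - 1` half-spaces determined by
vectors orthogonal to the subspace. -/
theorem plane_eq_inter_halfspaces
    (N : ℕ) (hN : 2 ≤ N) (V : Submodule ℝ (Fin N → ℝ))
    (hV : Module.finrank ℝ V = 2) :
    ∃ φ : Fin (N - 1) → (Fin N → ℝ),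
      (∀ i, ∀ v ∈ V, φ i ⬝ᵥ v = 0) ∧
      (V : Set (Fin N → ℝ)) = ⋂ i, {x : Fin N → ℝ | 0 ≤ φ i ⬝ᵥ x} :=
  plane_eq_inter_halfspaces_general N V hV
end

section
/- Let N ≥ 1, let 𝟙 ∈ ℝ^N be the all-ones vector, and let r* ∈ ℝ^N be non-constant (not a scalar multiple of 𝟙). Then there exist vectors φ₁, …, φ_N ∈ ℝ^N such that: (i) the coordinates of each φᵢ sum to zero; (ii) every entry of every φᵢ lies in the interval [1/N − 1, 1/N]; and (iii) { x ∈ ℝ^N : ⟨φᵢ, x⟩ ≥ 0 for all i = 1, …, N } = { λ₁·r* + λ₂·𝟙 : λ₁ ≥ 0, λ₂ ∈ ℝ }, the set of positive affine transformations of r*. -/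
/-!
Centring `r*` gives a nonzero vector `s` orthogonal to `𝟙`. Inside the plane
`K = span {𝟙, r*}` the cone is cut out by the single half-space `⟨s, x⟩ ≥ 0`, and `K`, of
codimension `N - 2`, is cut out by the `N - 1` half-spaces `⟨u, x⟩ ≥ 0` where `u` runs over a
basis of `Kᗮ` together with minus its sum. All these `N` normals are orthogonal to `𝟙`, so their
coordinates sum to zero, and a small positive rescaling puts their entries in
`[-1/N, 1/N] ⊆ [1/N - 1, 1/N]`.
-/

open scoped RealInnerProductSpace

namespace Module.Basis

variable {E : Type*} [NormedAddCommGroup E] [InnerProductSpace ℝ E] {ι : Type*} [Fintype ι]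
  {L : Submodule ℝ E}

noncomputable def withNegSum (b : Basis ι ℝ L) : Option ι → E
  | none => -∑ i, (b i : E)
  | some i => b i

theorem withNegSum_mem (b : Basis ι ℝ L) (i : Option ι) : b.withNegSum i ∈ L := by
  cases i with
  | none => exact L.neg_mem (L.sum_mem fun i _ => (b i).2)
  | some i => exact (b i).2

theorem forall_inner_withNegSum_nonneg_iff (b : Basis ι ℝ L) (x : E) :
    (∀ i, 0 ≤ ⟪b.withNegSum i, x⟫) ↔ x ∈ Lᗮ := by
  simp only [Option.forall, withNegSum, inner_neg_left, sum_inner, neg_nonneg]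
  constructor
  · rintro ⟨hsum, hb⟩
    have hzero : ∀ i, ⟪(b i : E), x⟫ = 0 := fun i =>
      (Finset.sum_eq_zero_iff_of_nonneg fun i _ => hb i).1
        (le_antisymm hsum (Finset.sum_nonneg fun i _ => hb i)) i (Finset.mem_univ i)
    refine (Submodule.mem_orthogonal L x).2 fun u hu => ?_
    calc ⟪u, x⟫ = ⟪((∑ i, b.repr ⟨u, hu⟩ i • b i : L) : E), x⟫ := by rw [b.sum_repr]
      _ = 0 := by
        simp only [Submodule.coe_sum, Submodule.coe_smul, sum_inner, real_inner_smul_left, hzero,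
          mul_zero, Finset.sum_const_zero]
  · intro hx
    have hzero : ∀ i, ⟪(b i : E), x⟫ = 0 := fun i =>
      Submodule.inner_right_of_mem_orthogonal (b i).2 hx
    simp [hzero]

end Module.Basis

section

variable {E : Type*} [NormedAddCommGroup E] [InnerProductSpace ℝ E]

theorem exists_inner_eq_zero_and_inner_pos {o r : E} (hr : ∀ c : ℝ, c • o ≠ r) :
    ∃ s : E, ⟪s, o⟫ = 0 ∧ 0 < ⟪s, r⟫ := by
  set s := r - (⟪o, r⟫ / ⟪o, o⟫) • o
  have hso : ⟪s, o⟫ = 0 := by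
    rw [real_inner_comm, inner_sub_right, inner_smul_right,
      div_mul_cancel_of_imp fun h => by simp [inner_self_eq_zero.1 h], sub_self]
  refine ⟨s, hso, ?_⟩
  have hs : s ≠ 0 := sub_ne_zero.2 (hr _).symm
  calc 0 < ⟪s, s⟫ := real_inner_self_pos.2 hs
    _ = ⟪s, r⟫ - ⟪s, (⟪o, r⟫ / ⟪o, o⟫) • o⟫ := inner_sub_right ..
    _ = ⟪s, r⟫ := by rw [inner_smul_right, hso, mul_zero, sub_zero]

theorem mem_span_pair_and_inner_nonneg_iff {o r s x : E} (hso : ⟪s, o⟫ = 0) (hsr : 0 < ⟪s, r⟫) :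
    x ∈ Submodule.span ℝ {o, r} ∧ 0 ≤ ⟪s, x⟫ ↔ ∃ a b : ℝ, 0 ≤ a ∧ x = a • r + b • o := by
  have hsx : ∀ a b : ℝ, ⟪s, a • r + b • o⟫ = a * ⟪s, r⟫ := fun a b => by
    simp [inner_add_right, inner_smul_right, hso]
  constructor
  · rintro ⟨hx, hsx_nonneg⟩
    obtain ⟨b, a, rfl⟩ := Submodule.mem_span_pair.1 hx
    rw [add_comm, hsx] at hsx_nonneg
    exact ⟨a, b, nonneg_of_mul_nonneg_left hsx_nonneg hsr, add_comm _ _⟩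
  · rintro ⟨a, b, ha, rfl⟩
    exact ⟨Submodule.mem_span_pair.2 ⟨b, a, add_comm _ _⟩, hsx a b ▸ mul_nonneg ha hsr.le⟩

theorem exists_forall_inner_nonneg_iff_eq_smul_add_smul [FiniteDimensional ℝ E] {o r : E}
    (ho : o ≠ 0) (hr : ∀ c : ℝ, c • o ≠ r) {n : ℕ} (hn : Module.finrank ℝ E = n) :
    ∃ ψ : Fin n → E, (∀ i, ⟪ψ i, o⟫ = 0) ∧
      ∀ x, (∀ i, 0 ≤ ⟪ψ i, x⟫) ↔ ∃ a b : ℝ, 0 ≤ a ∧ x = a • r + b • o := by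
  have hK : Module.finrank ℝ (Submodule.span ℝ {o, r}) = 2 := by
    rw [← Matrix.range_cons_cons_empty o r ![]]
    simp [finrank_span_eq_card ((LinearIndependent.pair_iff' ho).2 hr)]
  have hKperp : Module.finrank ℝ (Submodule.span ℝ {o, r})ᗮ = n - 2 ∧ 2 ≤ n := by
    have := (Submodule.span ℝ {o, r}).finrank_add_finrank_orthogonal
    omega
  let b := Module.finBasisOfFinrankEq ℝ _ hKperp.1
  obtain ⟨s, hso, hsr⟩ := exists_inner_eq_zero_and_inner_pos hr
  let e : Option (Option (Fin (n - 2))) ≃ Fin n :=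
    Fintype.equivFinOfCardEq (by simp only [Fintype.card_option, Fintype.card_fin]; omega)
  let ψ : Option (Option (Fin (n - 2))) → E := fun j => j.elim s b.withNegSum
  have hψo : ∀ j, ⟪ψ j, o⟫ = 0
    | none => hso
    | some j => Submodule.inner_left_of_mem_orthogonal (Submodule.subset_span (by simp))
        (b.withNegSum_mem j)
  have hψ : ∀ x, (∀ j, 0 ≤ ⟪ψ j, x⟫) ↔ ∃ a b : ℝ, 0 ≤ a ∧ x = a • r + b • o := fun x => by
    refine Option.forall.trans ?_
    change 0 ≤ ⟪s, x⟫ ∧ (∀ j, 0 ≤ ⟪b.withNegSum j, x⟫) ↔ _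
    rw [b.forall_inner_withNegSum_nonneg_iff, Submodule.orthogonal_orthogonal, and_comm]
    exact mem_span_pair_and_inner_nonneg_iff hso hsr
  exact ⟨ψ ∘ e.symm, fun i => hψo _, fun x => e.symm.forall_congr_right.trans (hψ x)⟩

end

theorem exists_pos_forall_norm_smul_le {ι F : Type*} [Finite ι] [SeminormedAddCommGroup F]
    [NormedSpace ℝ F] (v : ι → F) {c : ℝ} (hc : 0 < c) :
    ∃ ε : ℝ, 0 < ε ∧ ∀ i, ‖ε • v i‖ ≤ c := by
  obtain ⟨M, hM⟩ := Finite.exists_le fun i => ‖v i‖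
  refine ⟨c / max M 1, by positivity, fun i => ?_⟩
  calc ‖(c / max M 1) • v i‖ = c / max M 1 * ‖v i‖ := by
        rw [norm_smul, Real.norm_of_nonneg (by positivity)]
    _ ≤ c / max M 1 * max M 1 := by gcongr; exact (hM i).trans (le_max_left _ _)
    _ = c := div_mul_cancel₀ _ (by positivity)

theorem affine_set_eq_inter_halfspaces_general
    (N : ℕ) (rstar : Fin N → ℝ)
    (hr : ¬∃ c : ℝ, rstar = c • (1 : Fin N → ℝ)) :
    ∃ φ : Fin N → (Fin N → ℝ),
      (∀ i, ∑ j, φ i j = 0) ∧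
      (∀ i j, φ i j ∈ Set.Icc (1 / (N : ℝ) - 1) (1 / (N : ℝ))) ∧
      {x : Fin N → ℝ | ∀ i, 0 ≤ φ i ⬝ᵥ x} =
        {x : Fin N → ℝ |
          ∃ l1 l2 : ℝ, 0 ≤ l1 ∧ x = l1 • rstar + l2 • (1 : Fin N → ℝ)} := by
  set o : EuclideanSpace ℝ (Fin N) := WithLp.toLp 2 1
  have ho : o ≠ 0 := by
    obtain ⟨j, -⟩ : ∃ j, rstar j ≠ 0 := by
      by_contra! h
      exact hr ⟨0, funext fun j => by simp [h]⟩
    exact fun h => by simpa [o] using congrArg (fun v : EuclideanSpace ℝ (Fin N) => v j) h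
  have hr' : ∀ c : ℝ, c • o ≠ WithLp.toLp 2 rstar := fun c h =>
    hr ⟨c, by simpa [o] using congrArg WithLp.ofLp h.symm⟩
  have hN : 2 ≤ N := by
    simpa using ((LinearIndependent.pair_iff' ho).2 hr').fintype_card_le_finrank
  obtain ⟨ψ, hψo, hψ⟩ :=
    exists_forall_inner_nonneg_iff_eq_smul_add_smul ho hr' finrank_euclideanSpace_fin
  obtain ⟨ε, hε, hεψ⟩ :=
    exists_pos_forall_norm_smul_le (fun i => (ψ i).ofLp) (c := 1 / N) (by positivity)
  have hdot : ∀ i x, (ε • (ψ i).ofLp) ⬝ᵥ x = ε * ⟪ψ i, WithLp.toLp 2 x⟫ := fun i x => by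
    rw [smul_dotProduct, EuclideanSpace.inner_eq_star_dotProduct, star_trivial, dotProduct_comm]
    rfl
  refine ⟨fun i => ε • (ψ i).ofLp, fun i => ?_, fun i j => ?_, Set.ext fun x => ?_⟩
  · have h := hdot i 1
    rwa [dotProduct_one, show WithLp.toLp 2 1 = o from rfl, hψo, mul_zero] at h
  · have hij := abs_le.1 ((norm_le_pi_norm (ε • (ψ i).ofLp) j).trans (hεψ i))
    have hN' : 1 / (N : ℝ) ≤ 1 / 2 := one_div_le_one_div_of_le two_pos (by exact_mod_cast hN)
    exact ⟨by linarith [hij.1], hij.2⟩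
  · simp only [Set.mem_ofPred_eq, hdot, mul_nonneg_iff_of_pos_left hε, hψ, o,
      ← WithLp.toLp_smul, ← WithLp.toLp_add, (WithLp.toLp_injective 2).eq_iff]

/-- For any non-constant `r* ∈ ℝ^N` there are `N` vectors
`φ₁, …, φ_N`, each with coordinates summing to zero and entries in `[1/N - 1, 1/N]`,
whose joint half-space intersection is exactly the set of positive affine
transformations of `r*`. -/
theorem affine_set_eq_inter_halfspaces
    (N : ℕ) (hN : 1 ≤ N) (rstar : Fin N → ℝ)
    (hr : ¬∃ c : ℝ, rstar = c • (1 : Fin N → ℝ)) :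
    ∃ φ : Fin N → (Fin N → ℝ),
      (∀ i, ∑ j, φ i j = 0) ∧
      (∀ i j, φ i j ∈ Set.Icc (1 / (N : ℝ) - 1) (1 / (N : ℝ))) ∧
      {x : Fin N → ℝ | ∀ i, 0 ≤ φ i ⬝ᵥ x} =
        {x : Fin N → ℝ |
          ∃ l1 l2 : ℝ, 0 ≤ l1 ∧ x = l1 • rstar + l2 • (1 : Fin N → ℝ)} :=
  affine_set_eq_inter_halfspaces_general N rstar hr
end

section
/- Let N ≥ 1, γ ∈ [0,1), let 𝟙 ∈ ℝ^N be the all-ones vector, and let r* ∈ ℝ^N be non-constant (not a scalar multiple of 𝟙). Then there exist row-stochastic matrices P₁, P₂ : Matrix (Fin N) (Fin N) ℝ such that every entry of (P₁ − P₂) *ᵥ ((I − γ·P₁)⁻¹ *ᵥ r*) is nonnegative, and { r ∈ ℝ^N : every entry of (P₁ − P₂) *ᵥ ((I − γ·P₁)⁻¹ *ᵥ r) is nonnegative } = { λ₁·r* + λ₂·𝟙 : λ₁ ≥ 0, λ₂ ∈ ℝ }. That is, the set of reward vectors feasible under the constructed pair of transition matrices is exactly the set of positive affine transformations of r*. -/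
/-!
Take `P₁ = U`, the kernel with all entries `1 / N`, and `P₂ = U - c • A`, where `A` has zero row
sums and `c > 0` is small enough to keep `P₂` nonnegative. Since `U` is idempotent and
`A * U = 0`, we get `(P₁ - P₂) * (1 - γ • U)⁻¹ = c • A`, so the feasible rewards are exactly those
with `0 ≤ A *ᵥ r`. It remains to cut out the half-plane `{λ₁ • r* + λ₂ • 𝟙 | 0 ≤ λ₁}` by `N`
linear inequalities: extend `r*, 𝟙` to a basis and, writing `x₀, x₁, y₁, …, y_{N-2}` for the
coordinates, impose `0 ≤ x₀`, `yₖ ≤ 0` for each `k`, and `0 ≤ ∑ₖ yₖ`.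
-/

open Matrix Module

namespace Module.Basis

theorem sumExtend_apply_inl {ι K V : Type*} [DivisionRing K] [AddCommGroup V] [Module K V]
    {v : ι → V} (hv : LinearIndependent K v) (i : ι) : sumExtend hv (.inl i) = v i := by
  rw [sumExtend, reindex_apply, extend_apply_self]
  rfl

variable {K V σ : Type*} [CommRing K] [PartialOrder K] [IsOrderedRing K] [AddCommGroup V]
  [Module K V] [Fintype σ]

noncomputable def halfPlaneDual (b : Basis (Fin 2 ⊕ σ) K V) : Fin 2 ⊕ σ → Dual K V :=
  Sum.elim ![b.coord (.inl 0), ∑ s, b.coord (.inr s)] fun s => -b.coord (.inr s)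

theorem forall_halfPlaneDual_nonneg_iff (b : Basis (Fin 2 ⊕ σ) K V) (x : V) :
    (∀ i, 0 ≤ b.halfPlaneDual i x) ↔
      ∃ a c : K, 0 ≤ a ∧ x = a • b (.inl 0) + c • b (.inl 1) := by
  constructor
  · intro h
    have hσ : ∀ s, b.repr x (.inr s) = 0 := by
      have hle : ∀ s ∈ Finset.univ, b.repr x (.inr s) ≤ 0 := fun s _ => by
        simpa [halfPlaneDual] using h (.inr s)
      have hsum : 0 ≤ ∑ s, b.repr x (.inr s) := by simpa [halfPlaneDual] using h (.inl 1)
      exact fun s => (Finset.sum_eq_zero_iff_of_nonpos hle).1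
        (le_antisymm (Finset.sum_nonpos hle) hsum) s (Finset.mem_univ s)
    refine ⟨b.repr x (.inl 0), b.repr x (.inl 1), by simpa [halfPlaneDual] using h (.inl 0), ?_⟩
    calc x = ∑ i, b.repr x i • b i := (b.sum_repr x).symm
      _ = _ := by rw [Fintype.sum_sum_type, Fin.sum_univ_two]; simp [hσ]
  · rintro ⟨a, c, ha, rfl⟩ (i | s)
    · fin_cases i <;> simp [halfPlaneDual, ha]
    · simp [halfPlaneDual]

end Module.Basis

section HalfPlane

variable {K V : Type*} [Field K] [PartialOrder K] [IsOrderedRing K] [AddCommGroup V]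
  [Module K V] [FiniteDimensional K V]

theorem exists_dual_forall_nonneg_iff {ι : Type*} [Fintype ι] (hι : Fintype.card ι = finrank K V)
    {u v : V} (huv : LinearIndependent K ![u, v]) :
    ∃ f : ι → Dual K V, ∀ x, (∀ i, 0 ≤ f i x) ↔ ∃ a c : K, 0 ≤ a ∧ x = a • u + c • v := by
  let b := Basis.sumExtend huv
  have := Module.Finite.finite_basis b
  have := Finite.sum_right (Fin 2) (β := Basis.sumExtendIndex huv)
  have := Fintype.ofFinite (Basis.sumExtendIndex huv)
  let e : ι ≃ Fin 2 ⊕ Basis.sumExtendIndex huv :=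
    Fintype.equivOfCardEq (hι.trans (finrank_eq_card_basis b))
  refine ⟨b.halfPlaneDual ∘ e, fun x => ?_⟩
  calc (∀ i, 0 ≤ (b.halfPlaneDual ∘ e) i x) ↔ ∀ j, 0 ≤ b.halfPlaneDual j x :=
        e.forall_congr_right (q := fun j => 0 ≤ b.halfPlaneDual j x)
    _ ↔ _ := by
      rw [b.forall_halfPlaneDual_nonneg_iff, Basis.sumExtend_apply_inl, Basis.sumExtend_apply_inl]
      rfl

theorem exists_matrix_forall_mulVec_nonneg_iff {n : Type*} [Fintype n] [DecidableEq n]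
    {u v : n → K} (huv : LinearIndependent K ![u, v]) :
    ∃ A : Matrix n n K, ∀ x, (∀ i, 0 ≤ (A *ᵥ x) i) ↔ ∃ a c : K, 0 ≤ a ∧ x = a • u + c • v := by
  obtain ⟨f, hf⟩ := exists_dual_forall_nonneg_iff (Module.finrank_fintype_fun_eq_card K).symm huv
  exact ⟨LinearMap.toMatrix' (LinearMap.pi f), by simpa [LinearMap.toMatrix'_mulVec] using hf⟩

end HalfPlane

namespace Matrix

variable {m n K : Type*} [Fintype n] [Field K]

theorem mul_inv_one_sub_smul_of_mul_eq_zero [DecidableEq n] {M : Matrix m n K}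
    {P : Matrix n n K} (hP : IsIdempotentElem P) (hMP : M * P = 0) {γ : K} (hγ : γ ≠ 1) :
    M * (1 - γ • P)⁻¹ = M := by
  have hinv : (1 - γ • P)⁻¹ = 1 + (γ / (1 - γ)) • P := by
    refine inv_eq_right_inv ?_
    have h1γ : 1 - γ ≠ 0 := sub_ne_zero.2 hγ.symm
    rw [sub_mul, one_mul, Matrix.mul_add, Matrix.mul_one, smul_mul_smul_comm, hP.eq,
      add_sub_assoc, add_eq_left, ← add_smul, ← sub_smul,
      show γ / (1 - γ) - (γ + γ * (γ / (1 - γ))) = 0 by field_simp; ring, zero_smul]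
  rw [hinv, Matrix.mul_add, Matrix.mul_one, Matrix.mul_smul, hMP, smul_zero, add_zero]

variable (n K) in
def uniformKernel : Matrix n n K := of fun _ _ => (Fintype.card n : K)⁻¹

@[simp]
theorem uniformKernel_apply (i j : n) : uniformKernel n K i j = (Fintype.card n : K)⁻¹ := rfl

theorem sum_uniformKernel_apply [Nonempty n] [CharZero K] (i : n) :
    ∑ j, uniformKernel n K i j = 1 := by
  simp [Finset.card_univ]

theorem mul_uniformKernel_eq_zero {M : Matrix m n K} (hM : M *ᵥ 1 = 0) :
    M * uniformKernel n K = 0 := by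
  ext i j
  simpa [mul_apply, ← Finset.sum_mul, mulVec, dotProduct] using
    congrArg (· * (Fintype.card n : K)⁻¹) (congrFun hM i)

theorem isIdempotentElem_uniformKernel [DecidableEq n] [Nonempty n] [CharZero K] :
    IsIdempotentElem (uniformKernel n K) := by
  have h : (uniformKernel n K - 1) * uniformKernel n K = 0 :=
    mul_uniformKernel_eq_zero <| by
      ext i
      simp [mulVec, dotProduct, one_apply]
  rwa [sub_mul, one_mul, sub_eq_zero] at h

end Matrix

theorem Matrix.exists_pos_forall_mul_le {m n : Type*} [Finite m] [Finite n] (A : Matrix m n ℝ)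
    {ε : ℝ} (hε : 0 < ε) : ∃ c > 0, ∀ i j, c * A i j ≤ ε := by
  have hsmall : ∀ᶠ c in nhds (0 : ℝ), ∀ i j, c * A i j < ε :=
    Filter.eventually_all.2 fun i => Filter.eventually_all.2 fun j =>
      (continuous_id.mul continuous_const).tendsto' 0 0 (zero_mul _) |>.eventually (gt_mem_nhds hε)
  obtain ⟨c, hc, hcA⟩ :=
    ((hsmall.filter_mono nhdsWithin_le_nhds).and (self_mem_nhdsWithin (s := Set.Ioi 0))).exists
  exact ⟨c, hcA, fun i j => (hc i j).le⟩

theorem exists_kernels_feasible_set_eq_affine_general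
    (N : ℕ) (hN : 1 ≤ N) (γ : ℝ) (hγ1 : γ < 1)
    (rstar : Fin N → ℝ)
    (hr : ¬∃ c : ℝ, rstar = c • (1 : Fin N → ℝ)) :
    ∃ P₁ P₂ : Matrix (Fin N) (Fin N) ℝ,
      ((∀ i j, 0 ≤ P₁ i j) ∧ ∀ i, ∑ j, P₁ i j = 1) ∧
      ((∀ i j, 0 ≤ P₂ i j) ∧ ∀ i, ∑ j, P₂ i j = 1) ∧
      (∀ s, 0 ≤ ((P₁ - P₂) *ᵥ ((1 - γ • P₁)⁻¹ *ᵥ rstar)) s) ∧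
      {r : Fin N → ℝ | ∀ s, 0 ≤ ((P₁ - P₂) *ᵥ ((1 - γ • P₁)⁻¹ *ᵥ r)) s} =
        {r : Fin N → ℝ |
          ∃ l1 l2 : ℝ, 0 ≤ l1 ∧ r = l1 • rstar + l2 • (1 : Fin N → ℝ)} := by
  have : Nonempty (Fin N) := ⟨⟨0, hN⟩⟩
  have hindep : LinearIndependent ℝ ![rstar, 1] :=
    LinearIndependent.pair_symm_iff.1 <|
      (LinearIndependent.pair_iff' one_ne_zero).2 fun c hc => hr ⟨c, hc.symm⟩
  obtain ⟨A, hA⟩ := exists_matrix_forall_mulVec_nonneg_iff hindep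
  have hA1 : A *ᵥ 1 = 0 := by
    have hone := (hA 1).2 ⟨0, 1, le_rfl, by simp⟩
    have hneg := (hA (-1)).2 ⟨0, -1, le_rfl, by simp⟩
    ext i
    exact le_antisymm (neg_nonneg.1 (by simpa [mulVec_neg] using hneg i)) (hone i)
  obtain ⟨c, hc, hcA⟩ := A.exists_pos_forall_mul_le (ε := (N : ℝ)⁻¹) (by positivity)
  let U := uniformKernel (Fin N) ℝ
  have hfeas : ∀ r, (U - (U - c • A)) *ᵥ ((1 - γ • U)⁻¹ *ᵥ r) = c • (A *ᵥ r) := fun r => by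
    rw [sub_sub_cancel, mulVec_mulVec, smul_mul,
      mul_inv_one_sub_smul_of_mul_eq_zero isIdempotentElem_uniformKernel
        (mul_uniformKernel_eq_zero hA1) hγ1.ne, smul_mulVec]
  have hfeas_iff : ∀ r, (∀ s, 0 ≤ ((U - (U - c • A)) *ᵥ ((1 - γ • U)⁻¹ *ᵥ r)) s) ↔
      ∃ l1 l2 : ℝ, 0 ≤ l1 ∧ r = l1 • rstar + l2 • (1 : Fin N → ℝ) := fun r => by
    simp only [hfeas, Pi.smul_apply, smul_eq_mul, mul_nonneg_iff_of_pos_left hc, hA]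
  refine ⟨U, U - c • A, ⟨fun i j => by simp [U], sum_uniformKernel_apply⟩, ⟨?_, ?_⟩,
    (hfeas_iff rstar).2 ⟨1, 0, zero_le_one, by simp⟩, Set.ext hfeas_iff⟩
  · intro i j
    simpa [U] using hcA i j
  · intro i
    have hrow : ∑ j, A i j = 0 := by simpa [mulVec, dotProduct] using congrFun hA1 i
    simp only [Matrix.sub_apply, Matrix.smul_apply, smul_eq_mul, Finset.sum_sub_distrib,
      ← Finset.mul_sum, hrow, sum_uniformKernel_apply, U, mul_zero, sub_zero]

/-- **Theorem 2, matrix core, non-constant case.** For any non-constant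
reward `r* ∈ ℝ^N` and `γ ∈ [0,1)`, there exist row-stochastic matrices `P₁, P₂` such
that `r*` satisfies the feasibility constraints and the set of feasible reward vectors
is exactly the set of positive affine transformations of `r*`. -/
theorem exists_kernels_feasible_set_eq_affine
    (N : ℕ) (hN : 1 ≤ N) (γ : ℝ) (hγ0 : 0 ≤ γ) (hγ1 : γ < 1)
    (rstar : Fin N → ℝ)
    (hr : ¬∃ c : ℝ, rstar = c • (1 : Fin N → ℝ)) :
    ∃ P₁ P₂ : Matrix (Fin N) (Fin N) ℝ,
      ((∀ i j, 0 ≤ P₁ i j) ∧ ∀ i, ∑ j, P₁ i j = 1) ∧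
      ((∀ i j, 0 ≤ P₂ i j) ∧ ∀ i, ∑ j, P₂ i j = 1) ∧
      (∀ s, 0 ≤ ((P₁ - P₂) *ᵥ ((1 - γ • P₁)⁻¹ *ᵥ rstar)) s) ∧
      {r : Fin N → ℝ | ∀ s, 0 ≤ ((P₁ - P₂) *ᵥ ((1 - γ • P₁)⁻¹ *ᵥ r)) s} =
        {r : Fin N → ℝ |
          ∃ l1 l2 : ℝ, 0 ≤ l1 ∧ r = l1 • rstar + l2 • (1 : Fin N → ℝ)} :=
  exists_kernels_feasible_set_eq_affine_general N hN γ hγ1 rstar hr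
end

section
/- Let N ≥ 1, γ ∈ [0,1), and let 𝟙 ∈ ℝ^N be the all-ones vector. Then there exist row-stochastic matrices P₁, P₂ : Matrix (Fin N) (Fin N) ℝ such that { r ∈ ℝ^N : every entry of (P₁ − P₂) *ᵥ ((I − γ·P₁)⁻¹ *ᵥ r) is nonnegative } = { λ·𝟙 : λ ∈ ℝ }, the set of constant vectors. -/
/-!
Take `P₁` to be the permutation matrix of the cyclic shift `i ↦ i + 1` and `P₂ = 1`. Since
`‖P *ᵥ u‖∞ ≤ ‖u‖∞` for a row-stochastic `P`, the matrix `1 - γ • P₁` is invertible, and it maps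
constant vectors to constant vectors. Writing `v = (1 - γ • P₁)⁻¹ *ᵥ r`, feasibility of `r` says
`v i ≤ v (i + 1)` for all `i`; summing over the cycle forces equality, so `v`, and with it `r`,
is constant. Conversely `P₁ - P₂` kills constant vectors whenever both are row-stochastic.
-/

open Matrix

namespace Matrix

variable {n : Type*} [Fintype n] [DecidableEq n]

lemma mulVec_nonsing_inv_mulVec {R : Type*} [CommRing R] {A : Matrix n n R} (hA : IsUnit A.det)
    (r : n → R) : A *ᵥ (A⁻¹ *ᵥ r) = r := by
  rw [mulVec_mulVec, mul_nonsing_inv A hA, one_mulVec]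

lemma nonsing_inv_mulVec_mulVec {R : Type*} [CommRing R] {A : Matrix n n R} (hA : IsUnit A.det)
    (v : n → R) : A⁻¹ *ᵥ (A *ᵥ v) = v := by
  rw [mulVec_mulVec, nonsing_inv_mul A hA, one_mulVec]

variable {P : Matrix n n ℝ}

lemma norm_mulVec_le_of_mem_rowStochastic (hP : P ∈ rowStochastic ℝ n) (u : n → ℝ) :
    ‖P *ᵥ u‖ ≤ ‖u‖ := by
  refine (pi_norm_le_iff_of_nonneg (norm_nonneg u)).2 fun i => ?_
  calc ‖∑ j, P i j * u j‖ ≤ ∑ j, P i j * ‖u‖ := by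
        refine (norm_sum_le _ _).trans (Finset.sum_le_sum fun j _ => ?_)
        rw [norm_mul, Real.norm_of_nonneg (hP.1 i j)]
        exact mul_le_mul_of_nonneg_left (norm_le_pi_norm u j) (hP.1 i j)
    _ = ‖u‖ := by rw [← Finset.sum_mul, sum_row_of_mem_rowStochastic hP, one_mul]

lemma isUnit_one_sub_smul_of_mem_rowStochastic (hP : P ∈ rowStochastic ℝ n) {γ : ℝ}
    (hγ0 : 0 ≤ γ) (hγ1 : γ < 1) : IsUnit (1 - γ • P) := by
  refine mulVec_injective_iff_isUnit.1 fun u w huw => ?_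
  have hfix : u - w = γ • (P *ᵥ (u - w)) := by
    have hker : (1 - γ • P) *ᵥ (u - w) = 0 := by rw [mulVec_sub, huw, sub_self]
    rwa [sub_mulVec, one_mulVec, smul_mulVec, sub_eq_zero] at hker
  have hle : ‖u - w‖ ≤ γ * ‖u - w‖ := calc
    ‖u - w‖ = γ * ‖P *ᵥ (u - w)‖ := by
      rw [hfix, norm_smul, Real.norm_of_nonneg hγ0, ← hfix]
    _ ≤ γ * ‖u - w‖ := mul_le_mul_of_nonneg_left (norm_mulVec_le_of_mem_rowStochastic hP _) hγ0
  have hzero : ‖u - w‖ = 0 := by nlinarith [norm_nonneg (u - w)]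
  exact sub_eq_zero.1 (norm_eq_zero.1 hzero)

lemma one_sub_smul_mulVec_smul_one (hP : P ∈ rowStochastic ℝ n) (γ c : ℝ) :
    (1 - γ • P) *ᵥ (c • 1) = ((1 - γ) * c) • (1 : n → ℝ) := by
  rw [sub_mulVec, one_mulVec, smul_mulVec, mulVec_smul, one_vecMul_of_mem_rowStochastic hP,
    smul_smul, ← sub_smul, sub_mul, one_mul]

lemma one_sub_smul_inv_mulVec_smul_one (hP : P ∈ rowStochastic ℝ n) {γ : ℝ} (hγ0 : 0 ≤ γ)
    (hγ1 : γ < 1) (c : ℝ) :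
    (1 - γ • P)⁻¹ *ᵥ (c • 1) = ((1 - γ)⁻¹ * c) • (1 : n → ℝ) := by
  have hA := isUnit_one_sub_smul_of_mem_rowStochastic hP hγ0 hγ1
  apply mulVec_injective_iff_isUnit.2 hA
  rw [mulVec_nonsing_inv_mulVec ((isUnit_iff_isUnit_det _).1 hA),
    one_sub_smul_mulVec_smul_one hP, ← mul_assoc, mul_inv_cancel₀ (by linarith), one_mul]

end Matrix

lemma Equiv.Perm.comp_eq_of_le_comp {ι M : Type*} [Fintype ι] [AddCommMonoid M] [PartialOrder M]
    [IsOrderedCancelAddMonoid M] (σ : Equiv.Perm ι) {v : ι → M} (h : ∀ i, v i ≤ v (σ i)) :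
    v ∘ σ = v :=
  funext fun i => Eq.symm <|
    (Finset.sum_eq_sum_iff_of_le fun i _ => h i).1 (Equiv.sum_comp σ v).symm i (Finset.mem_univ i)

lemma exists_eq_const_of_comp_finRotate_eq {α : Type*} [Nonempty α] {N : ℕ} {v : Fin N → α}
    (h : v ∘ finRotate N = v) : ∃ c, v = Function.const _ c := by
  cases N with
  | zero => exact ⟨Classical.arbitrary α, funext (·.elim0)⟩
  | succ m =>
    refine ⟨v 0, funext fun i => Fin.induction rfl (fun i (hi : v i.castSucc = v 0) => ?_) i⟩
    change v i.succ = v 0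
    rw [← hi, ← congrFun h i.castSucc, Function.comp_apply, finRotate_apply, Fin.coeSucc_eq_succ]

section FeasibleRewards

variable {n : Type*} [Fintype n] [DecidableEq n]

def feasibleRewards (γ : ℝ) (P₁ P₂ : Matrix n n ℝ) : Set (n → ℝ) :=
  {r | ∀ s, 0 ≤ ((P₁ - P₂) *ᵥ ((1 - γ • P₁)⁻¹ *ᵥ r)) s}

lemma smul_one_mem_feasibleRewards {P₁ P₂ : Matrix n n ℝ} (hP₁ : P₁ ∈ rowStochastic ℝ n)
    (hP₂ : P₂ ∈ rowStochastic ℝ n) {γ : ℝ} (hγ0 : 0 ≤ γ) (hγ1 : γ < 1) (c : ℝ) :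
    c • 1 ∈ feasibleRewards γ P₁ P₂ := fun s => by
  rw [one_sub_smul_inv_mulVec_smul_one hP₁ hγ0 hγ1, mulVec_smul, sub_mulVec,
    one_vecMul_of_mem_rowStochastic hP₁, one_vecMul_of_mem_rowStochastic hP₂, sub_self, smul_zero,
    Pi.zero_apply]

lemma feasibleRewards_permMatrix_finRotate_one {N : ℕ} {γ : ℝ} (hγ0 : 0 ≤ γ) (hγ1 : γ < 1) :
    feasibleRewards γ ((finRotate N).permMatrix ℝ) 1 = {r | ∃ l : ℝ, r = l • 1} := by
  have hP : (finRotate N).permMatrix ℝ ∈ rowStochastic ℝ (Fin N) := permMatrix_mem_rowStochastic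
  refine Set.Subset.antisymm (fun r hr => ?_) ?_
  · have hdet := (isUnit_iff_isUnit_det _).1 (isUnit_one_sub_smul_of_mem_rowStochastic hP hγ0 hγ1)
    obtain ⟨v, rfl⟩ : ∃ v, (1 - γ • (finRotate N).permMatrix ℝ) *ᵥ v = r :=
      ⟨_, mulVec_nonsing_inv_mulVec hdet r⟩
    have hv : v ∘ finRotate N = v := Equiv.Perm.comp_eq_of_le_comp _ fun s => by
      have hs := hr s
      rwa [nonsing_inv_mulVec_mulVec hdet, sub_mulVec, one_mulVec, permMatrix_mulVec, Pi.sub_apply,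
        sub_nonneg] at hs
    obtain ⟨c, rfl⟩ := exists_eq_const_of_comp_finRotate_eq hv
    exact ⟨(1 - γ) * c, by
      rw [← one_sub_smul_mulVec_smul_one hP]
      congr 1
      ext
      simp⟩
  · rintro r ⟨l, rfl⟩
    exact smul_one_mem_feasibleRewards hP (one_mem _) hγ0 hγ1 l

end FeasibleRewards

theorem exists_kernels_feasible_set_eq_constants_general
    (N : ℕ) (γ : ℝ) (hγ0 : 0 ≤ γ) (hγ1 : γ < 1) :
    ∃ P₁ P₂ : Matrix (Fin N) (Fin N) ℝ,
      ((∀ i j, 0 ≤ P₁ i j) ∧ ∀ i, ∑ j, P₁ i j = 1) ∧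
      ((∀ i j, 0 ≤ P₂ i j) ∧ ∀ i, ∑ j, P₂ i j = 1) ∧
      {r : Fin N → ℝ | ∀ s, 0 ≤ ((P₁ - P₂) *ᵥ ((1 - γ • P₁)⁻¹ *ᵥ r)) s} =
        {r : Fin N → ℝ | ∃ l : ℝ, r = l • (1 : Fin N → ℝ)} :=
  ⟨(finRotate N).permMatrix ℝ, 1, mem_rowStochastic_iff_sum.1 permMatrix_mem_rowStochastic,
    mem_rowStochastic_iff_sum.1 (one_mem _), feasibleRewards_permMatrix_finRotate_one hγ0 hγ1⟩

/-- **Theorem 2, matrix core, constant-reward case.** For `γ ∈ [0,1)`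
there exist row-stochastic matrices `P₁, P₂` on `ℝ^N` such that the set of feasible
reward vectors is exactly the set of constant vectors `{λ • 𝟙 : λ ∈ ℝ}`. -/
theorem exists_kernels_feasible_set_eq_constants
    (N : ℕ) (hN : 1 ≤ N) (γ : ℝ) (hγ0 : 0 ≤ γ) (hγ1 : γ < 1) :
    ∃ P₁ P₂ : Matrix (Fin N) (Fin N) ℝ,
      ((∀ i j, 0 ≤ P₁ i j) ∧ ∀ i, ∑ j, P₁ i j = 1) ∧
      ((∀ i j, 0 ≤ P₂ i j) ∧ ∀ i, ∑ j, P₂ i j = 1) ∧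
      {r : Fin N → ℝ | ∀ s, 0 ≤ ((P₁ - P₂) *ᵥ ((1 - γ • P₁)⁻¹ *ᵥ r)) s} =
        {r : Fin N → ℝ | ∃ l : ℝ, r = l • (1 : Fin N → ℝ)} :=
  exists_kernels_feasible_set_eq_constants_general N γ hγ0 hγ1
end

section
/- Let S be a finite nonempty type, γ ∈ [0,1), let Π be a finite nonempty type indexing policies, and for each π : Π let P π : Matrix S S ℝ be row-stochastic. For r : S → ℝ define V π r = (I − γ·(P π))⁻¹ *ᵥ r, and define Opt(r) = { π : Π | ∀ ν : Π, ∀ s : S, (V ν r) s ≤ (V π r) s }. Let r*, r₁, r₂ : S → ℝ satisfy Opt(r₁) = Opt(r*), Opt(r₂) = Opt(r*), and Opt(r*) ≠ ∅. Then for every λ ∈ [0,1], Opt(λ • r₁ + (1−λ) • r₂) = Opt(r*). In particular, the set of reward vectors whose optimal policy set coincides with that of r* is convex. -/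
open Matrix

/-- The set of optimal policy indices under reward vector `r`: those `π` whose value
vector `(I - γ • P π)⁻¹ *ᵥ r` dominates every other value vector entrywise. -/
def optSet {S Pol : Type*} [Fintype S] [DecidableEq S]
    (γ : ℝ) (P : Pol → Matrix S S ℝ) (r : S → ℝ) : Set Pol :=
  {π | ∀ ν : Pol, ∀ s : S, ((1 - γ • P ν)⁻¹ *ᵥ r) s ≤ ((1 - γ • P π)⁻¹ *ᵥ r) s}

/-- **convexity of the set of rewards inducing the optimal policies.**
If `Opt(r₁) = Opt(r₂) = Opt(r*) ≠ ∅`, then every convex combination of `r₁` and `r₂`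
has the same optimal policy set `Opt(r*)`. -/
theorem optSet_convex
    {S Pol : Type*} [Fintype S] [Nonempty S] [DecidableEq S]
    [Fintype Pol] [Nonempty Pol]
    (γ : ℝ) (hγ0 : 0 ≤ γ) (hγ1 : γ < 1)
    (P : Pol → Matrix S S ℝ)
    (hP : ∀ π, (∀ i j, 0 ≤ P π i j) ∧ ∀ i, ∑ j, P π i j = 1)
    (rstar r₁ r₂ : S → ℝ)
    (h1 : optSet γ P r₁ = optSet γ P rstar)
    (h2 : optSet γ P r₂ = optSet γ P rstar)
    (hne : (optSet γ P rstar).Nonempty) :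
    ∀ l : ℝ, l ∈ Set.Icc (0 : ℝ) 1 →
      optSet γ P (l • r₁ + (1 - l) • r₂) = optSet γ P rstar := by
  intro l hl
  obtain ⟨hl0, hl1⟩ := hl
  obtain ⟨πs, hπs⟩ := hne
  have h1' : πs ∈ optSet γ P r₁ := h1 ▸ hπs
  have h2' : πs ∈ optSet γ P r₂ := h2 ▸ hπs
  have key : ∀ (M : Matrix S S ℝ) (s : S), (M *ᵥ (l • r₁ + (1 - l) • r₂)) s
      = l * (M *ᵥ r₁) s + (1 - l) * (M *ᵥ r₂) s := by
    intro M s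
    rw [mulVec_add, mulVec_smul, mulVec_smul]
    simp
  ext π
  constructor
  · intro hπ
    have hboth : ∀ s : S,
        l * ((1 - γ • P π)⁻¹ *ᵥ r₁) s = l * ((1 - γ • P πs)⁻¹ *ᵥ r₁) s ∧
        (1 - l) * ((1 - γ • P π)⁻¹ *ᵥ r₂) s = (1 - l) * ((1 - γ • P πs)⁻¹ *ᵥ r₂) s := by
      intro s
      have a1 : ((1 - γ • P π)⁻¹ *ᵥ r₁) s ≤ ((1 - γ • P πs)⁻¹ *ᵥ r₁) s := h1' π s
      have a2 : ((1 - γ • P π)⁻¹ *ᵥ r₂) s ≤ ((1 - γ • P πs)⁻¹ *ᵥ r₂) s := h2' π s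
      have hm1 := mul_le_mul_of_nonneg_left a1 hl0
      have hm2 := mul_le_mul_of_nonneg_left a2 (by linarith : (0:ℝ) ≤ 1 - l)
      have hc := hπ πs s
      rw [key, key] at hc
      constructor <;> linarith
    rcases lt_or_eq_of_le hl0 with hlpos | hlzero
    · have hv : ∀ s : S, ((1 - γ • P π)⁻¹ *ᵥ r₁) s = ((1 - γ • P πs)⁻¹ *ᵥ r₁) s := by
        intro s
        exact mul_left_cancel₀ (ne_of_gt hlpos) (hboth s).1
      have : π ∈ optSet γ P r₁ := by
        intro ν s
        exact (h1' ν s).trans (hv s).symm.le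
      exact h1 ▸ this
    · have hlpos : (0:ℝ) < 1 - l := by linarith
      have hv : ∀ s : S, ((1 - γ • P π)⁻¹ *ᵥ r₂) s = ((1 - γ • P πs)⁻¹ *ᵥ r₂) s := by
        intro s
        exact mul_left_cancel₀ (ne_of_gt hlpos) (hboth s).2
      have : π ∈ optSet γ P r₂ := by
        intro ν s
        exact (h2' ν s).trans (hv s).symm.le
      exact h2 ▸ this
  · intro hπ
    have hπ1 : π ∈ optSet γ P r₁ := h1.symm ▸ hπ
    have hπ2 : π ∈ optSet γ P r₂ := h2.symm ▸ hπ
    intro ν s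
    rw [key, key]
    have hm1 := mul_le_mul_of_nonneg_left (hπ1 ν s) hl0
    have hm2 := mul_le_mul_of_nonneg_left (hπ2 ν s) (by linarith : (0:ℝ) ≤ 1 - l)
    linarith
end

section
/- Let f : ℝ → ℝ be strictly increasing on [0, ∞) with f(t) ≥ 0 for all t ≥ 0. Then for every y > 0 there exists x > 0 such that x·f(x)/(f(x) + f(y)) + y·f(y)/(f(x) + f(y)) < x·f(x)/(f(x) + f(0)). (All denominators are positive since f is strictly increasing and nonnegative on [0,∞) and x, y > 0.) -/
/-! Write `a = f x`, `b = f y`, `c = f 0`, so `0 ≤ c < b ≤ a` for `x ≥ y`. Cross-multiplied, the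
inequality reads `y b (a + c) < x a (b - c)`, and since `a + c ≤ 2a` it suffices that
`2 y b < x (b - c)`, which holds for all large `x` because `b - c > 0`. -/

lemma mul_add_mul_div_add_lt_mul_div_add {a b c x y : ℝ} (hc : 0 ≤ c) (hcb : c < b)
    (hba : b ≤ a) (hy : 0 ≤ y) (hx : 2 * y * b < x * (b - c)) :
    (x * a + y * b) / (a + b) < x * a / (a + c) := by
  have ha : 0 < a := by linarith
  have key : y * b * (a + c) < x * a * (b - c) :=
    calc y * b * (a + c) ≤ 2 * y * b * a := by nlinarith [mul_nonneg hy (hc.trans hcb.le)]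
      _ < x * (b - c) * a := mul_lt_mul_of_pos_right hx ha
      _ = x * a * (b - c) := by ring
  rw [div_lt_div_iff₀ (by linarith) (by linarith)]
  linear_combination key

/-- **core of Theorem 3.** If `f` is strictly increasing and
nonnegative on `[0, ∞)`, then for every `y > 0` there exists `x > 0` such that
`x·f(x)/(f(x)+f(y)) + y·f(y)/(f(x)+f(y)) < x·f(x)/(f(x)+f(0))`. -/
theorem exists_x_no_dominating_commitment
    (f : ℝ → ℝ) (hmono : StrictMonoOn f (Set.Ici 0))
    (hnonneg : ∀ t : ℝ, 0 ≤ t → 0 ≤ f t)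
    (y : ℝ) (hy : 0 < y) :
    ∃ x : ℝ, 0 < x ∧
      x * f x / (f x + f y) + y * f y / (f x + f y) < x * f x / (f x + f 0) := by
  have hcb : f 0 < f y := hmono Set.self_mem_Ici (Set.mem_Ici.2 hy.le) hy
  obtain ⟨x, hxmax⟩ := exists_gt (max y (2 * y * f y / (f y - f 0)))
  obtain ⟨hyx, hx⟩ := max_lt_iff.1 hxmax
  have hx0 : 0 < x := hy.trans hyx
  refine ⟨x, hx0, ?_⟩
  rw [← add_div]
  refine mul_add_mul_div_add_lt_mul_div_add (hnonneg 0 le_rfl) hcb ?_ hy.le ?_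
  · exact hmono.monotoneOn (Set.mem_Ici.2 hy.le) (Set.mem_Ici.2 hx0.le) hyx.le
  · rwa [div_lt_iff₀ (sub_pos.2 hcb)] at hx
end
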